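/- arXiv:2405.07757 — 3 statements merged into one kernel-verified Lean document; each statement's English description precedes it below -/
import Mathlib

section
/- For every p ∈ ℕ and s ∈ [p], there exists a finite subset N of the Euclidean unit sphere S^{p−1} ⊂ ℝᵖ, each of whose elements has at most s non-zero entries, with cardinality |N| ≤ binomial(p,s)·9^s, such that for every symmetric matrix A ∈ ℝ^{p×p}, λ_max^s(A) ≤ 2·max_{v∈N} |vᵀAv|. -/
open MeasureTheory ProbabilityTheory Real Matrix

noncomputable section

namespace CovCP

/-- The Orlicz `Ψ₂` (sub-Gaussian) norm of a real random variable. -/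
def psi2Norm {Ω : Type*} [MeasurableSpace Ω] (μ : Measure Ω) (Y : Ω → ℝ) : ℝ :=
  sInf {t : ℝ | 0 < t ∧ (∫ ω, Real.exp (Y ω ^ 2 / t ^ 2) ∂μ) ≤ 2}

/-- The Orlicz `Ψ₂` norm of an `ℝᵖ`-valued random vector. -/
def psi2NormVec {Ω : Type*} [MeasurableSpace Ω] {p : ℕ} (μ : Measure Ω)
    (X : Ω → Fin p → ℝ) : ℝ :=
  sSup {r : ℝ | ∃ v : Fin p → ℝ, (∑ j, v j ^ 2) = 1 ∧
    r = psi2Norm μ (fun ω => ∑ j, v j * X ω j)}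

/-- The law of `Y` under `μ` has a Lebesgue density bounded above by `w`. -/
def densityBoundedBy {Ω : Type*} [MeasurableSpace Ω] (μ : Measure Ω) (Y : Ω → ℝ)
    (w : ℝ) : Prop :=
  ∃ f : ℝ → ℝ, (∀ x, 0 ≤ f x) ∧ (∀ x, f x ≤ w) ∧
    μ.map Y = volume.withDensity fun x => ENNReal.ofReal (f x)

/-- The law of `Y` under `μ` has a continuous Lebesgue density bounded above by `w`. -/
def contDensityBoundedBy {Ω : Type*} [MeasurableSpace Ω] (μ : Measure Ω) (Y : Ω → ℝ)
    (w : ℝ) : Prop :=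
  ∃ f : ℝ → ℝ, Continuous f ∧ (∀ x, 0 ≤ f x) ∧ (∀ x, f x ≤ w) ∧
    μ.map Y = volume.withDensity fun x => ENNReal.ofReal (f x)

/-- Variance of a real random variable. -/
def rvVar {Ω : Type*} [MeasurableSpace Ω] (μ : Measure Ω) (Y : Ω → ℝ) : ℝ :=
  ∫ ω, (Y ω - ∫ ω', Y ω' ∂μ) ^ 2 ∂μ

/-- `log log (8 n)`. -/
def loglog8 (n : ℕ) : ℝ := Real.log (Real.log (8 * n))

/-- The geometric grid of candidate changepoint locations `{2^0, …, 2^⌊log₂(n/2)⌋}`. -/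
def Tgrid (n : ℕ) : Finset ℕ := (Finset.range (Nat.log 2 (n / 2) + 1)).image fun k => 2 ^ k

/-- The geometric grid of candidate sparsities `{2^0, …, 2^⌊log₂ p⌋}`. -/
def Sgrid (p : ℕ) : Finset ℕ := (Finset.range (Nat.log 2 p + 1)).image fun k => 2 ^ k

/-- Largest absolute `s`-sparse eigenvalue of a `p × p` real matrix. -/
def sparseEig {p : ℕ} (s : ℕ) (A : Matrix (Fin p) (Fin p) ℝ) : ℝ :=
  sSup {r : ℝ | ∃ v : Fin p → ℝ, (∑ j, v j ^ 2) = 1 ∧ {j | v j ≠ 0}.ncard ≤ s ∧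
    r = abs (v ⬝ᵥ A.mulVec v)}

/-- Operator norm of a `p × p` real matrix (as an operator on Euclidean space). -/
def matOpNorm {p : ℕ} (A : Matrix (Fin p) (Fin p) ℝ) : ℝ :=
  sSup {r : ℝ | ∃ v : Fin p → ℝ, (∑ j, v j ^ 2) = 1 ∧
    r = Real.sqrt (∑ i, A.mulVec v i ^ 2)}

/-- Largest eigenvalue of a symmetric matrix, `sup_{‖v‖ = 1} vᵀ M v`. -/
def lamMaxSym {p : ℕ} (M : Matrix (Fin p) (Fin p) ℝ) : ℝ :=
  sSup {r : ℝ | ∃ v : Fin p → ℝ, (∑ j, v j ^ 2) = 1 ∧ r = v ⬝ᵥ M.mulVec v}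

/-- Semidefinite-programming relaxation of the largest absolute `s`-sparse eigenvalue. -/
def sdpEig {p : ℕ} (s : ℕ) (A : Matrix (Fin p) (Fin p) ℝ) : ℝ :=
  sSup {r : ℝ | ∃ Z : Matrix (Fin p) (Fin p) ℝ, Z.PosSemidef ∧ Z.trace = 1 ∧
    (∑ i, ∑ j, abs (Z i j)) ≤ (s : ℝ) ∧ r = abs (A * Z).trace}

/-- Assumption 1 of the paper (univariate data). -/
structure Assumption1 (n : ℕ) (w u : ℝ) (μ : Measure (Fin n → ℝ)) : Prop where
  prob : IsProbabilityMeasure μ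
  indep : iIndepFun (m := fun _ : Fin n => (inferInstance : MeasurableSpace ℝ)) (fun i ω => ω i) μ
  meanZero : ∀ i, (∫ ω, ω i ∂μ) = 0
  density : ∀ i, densityBoundedBy μ (fun ω => ω i / Real.sqrt (∫ ω', ω' i ^ 2 ∂μ)) w
  subGauss : ∀ i, psi2Norm μ (fun ω => ω i) ^ 2 ≤ u * ∫ ω, ω i ^ 2 ∂μ

/-- Covariance matrix of the coordinates of a measure on `ℝⁿ`. -/
def covMatrix {n : ℕ} (μ : Measure (Fin n → ℝ)) : Matrix (Fin n) (Fin n) ℝ :=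
  Matrix.of fun i j => ∫ ω, (ω i - ∫ ω', ω' i ∂μ) * (ω j - ∫ ω', ω' j ∂μ) ∂μ

/-- Null-hypothesis parameter space, univariate case. -/
def Theta0Uni (n : ℕ) (σ : ℝ) : Set (Matrix (Fin n) (Fin n) ℝ) :=
  {σ ^ 2 • (1 : Matrix (Fin n) (Fin n) ℝ)}

/-- Alternative-hypothesis parameter space, univariate case. -/
def ThetaUni (n : ℕ) (ρ : ℝ) : Set (Matrix (Fin n) (Fin n) ℝ) :=
  {V | ∃ t0 : ℕ, 1 ≤ t0 ∧ t0 ≤ n - 1 ∧ ∃ s1 s2 : ℝ, 0 < s1 ∧ 0 < s2 ∧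
    V = Matrix.diagonal (fun i : Fin n => if (i : ℕ) < t0 then s1 else s2) ∧
    min (t0 : ℝ) ((n : ℝ) - t0) *
      min (|s1 - s2| / min s1 s2) ((|s1 - s2| / min s1 s2) ^ 2) = ρ}

/-- Null-hypothesis class of distributions, univariate case. -/
def P0Uni (n : ℕ) (w u σ : ℝ) : Set (Measure (Fin n → ℝ)) :=
  {μ | Assumption1 n w u μ ∧ covMatrix μ ∈ Theta0Uni n σ}

/-- Alternative-hypothesis class of distributions, univariate case. -/
def PUni (n : ℕ) (w u ρ : ℝ) : Set (Measure (Fin n → ℝ)) :=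
  {μ | Assumption1 n w u μ ∧ covMatrix μ ∈ ThetaUni n ρ}

/-- Minimax testing error, univariate case. -/
def minimaxErrorUni (n : ℕ) (σ w u ρ : ℝ) : ℝ :=
  ⨅ ψ : {ψ : (Fin n → ℝ) → ℝ // Measurable ψ ∧ ∀ x, ψ x = 0 ∨ ψ x = 1},
    ((⨆ μ' ∈ P0Uni n w u σ, ∫ x, ψ.1 x ∂μ') +
      ⨆ μ' ∈ PUni n w u ρ, ∫ x, (1 - ψ.1 x) ∂μ')

/-- Empirical variance of the first `t` observations. -/
def sigHat1 {n : ℕ} (t : ℕ) (x : Fin n → ℝ) : ℝ :=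
  (t : ℝ)⁻¹ * ∑ i ∈ Finset.univ.filter (fun i : Fin n => (i : ℕ) < t), x i ^ 2

/-- Empirical variance of the last `t` observations. -/
def sigHat2 {n : ℕ} (t : ℕ) (x : Fin n → ℝ) : ℝ :=
  (t : ℝ)⁻¹ * ∑ i ∈ Finset.univ.filter (fun i : Fin n => n - t ≤ (i : ℕ)), x i ^ 2

/-- The variance-ratio statistic `S_t`. -/
def SstatUni {n : ℕ} (t : ℕ) (x : Fin n → ℝ) : ℝ :=
  max (sigHat1 t x / sigHat2 t x) (sigHat2 t x / sigHat1 t x) - 1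

/-- The univariate changepoint test `ψ_λ`. -/
def psiUni (n : ℕ) (lam : ℝ) : (Fin n → ℝ) → ℝ :=
  Set.indicator {x | ∃ t ∈ Tgrid n,
    lam * max (Real.sqrt (loglog8 n / t)) (loglog8 n / t) < SstatUni t x} 1

/-- Assumption 2 of the paper (multivariate data). -/
structure Assumption2 (p n : ℕ) (u : ℝ) (μ : Measure (Fin n → Fin p → ℝ)) : Prop where
  prob : IsProbabilityMeasure μ
  indep : iIndepFun (m := fun _ : Fin n => (inferInstance : MeasurableSpace (Fin p → ℝ)))
    (fun i ω => ω i) μ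
  meanZero : ∀ i j, (∫ ω, ω i j ∂μ) = 0
  subGauss : ∀ i, psi2NormVec μ (fun ω => ω i) ^ 2 ≤
    u * matOpNorm (Matrix.of fun a b => ∫ ω, ω i a * ω i b ∂μ)

/-- Assumption 3 of the paper. -/
structure Assumption3 (p n : ℕ) (w u : ℝ) (μ : Measure (Fin n → Fin p → ℝ)) : Prop where
  prob : IsProbabilityMeasure μ
  indep : iIndepFun (m := fun _ : Fin n => (inferInstance : MeasurableSpace (Fin p → ℝ)))
    (fun i ω => ω i) μ
  meanZero : ∀ i j, (∫ ω, ω i j ∂μ) = 0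
  density : ∀ (i : Fin n) (v : Fin p → ℝ), (∑ j, v j ^ 2) = 1 →
    contDensityBoundedBy μ
      (fun ω => (∑ j, v j * ω i j) / Real.sqrt (∫ ω', (∑ j, v j * ω' i j) ^ 2 ∂μ)) w
  subGauss : ∀ (i : Fin n) (v : Fin p → ℝ), (∑ j, v j ^ 2) = 1 →
    psi2Norm μ (fun ω => ∑ j, v j * ω i j) ^ 2 ≤ u * ∫ ω, (∑ j, v j * ω i j) ^ 2 ∂μ

/-- Covariance matrix of the `i`-th observation. -/
def blockCov {p n : ℕ} (μ : Measure (Fin n → Fin p → ℝ)) (i : Fin n) :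
    Matrix (Fin p) (Fin p) ℝ :=
  Matrix.of fun a b => ∫ ω, (ω i a - ∫ ω', ω' i a ∂μ) * (ω i b - ∫ ω', ω' i b ∂μ) ∂μ

/-- Covariance matrix of the stacked vector `X = (X₁ᵀ, …, Xₙᵀ)ᵀ`. -/
def fullCov {p n : ℕ} (μ : Measure (Fin n → Fin p → ℝ)) :
    Matrix (Fin n × Fin p) (Fin n × Fin p) ℝ :=
  Matrix.of fun x y =>
    ∫ ω, (ω x.1 x.2 - ∫ ω', ω' x.1 x.2 ∂μ) * (ω y.1 y.2 - ∫ ω', ω' y.1 y.2 ∂μ) ∂μ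

/-- Block-diagonal `pn × pn` matrix with `p × p` diagonal blocks `B 0, …, B (n-1)`. -/
def blockDiag {p n : ℕ} (B : Fin n → Matrix (Fin p) (Fin p) ℝ) :
    Matrix (Fin n × Fin p) (Fin n × Fin p) ℝ :=
  Matrix.of fun x y => if x.1 = y.1 then B x.1 x.2 y.2 else 0

/-- Null-hypothesis parameter space, multivariate case. -/
def Theta0Multi (p n : ℕ) (σ : ℝ) : Set (Matrix (Fin n × Fin p) (Fin n × Fin p) ℝ) :=
  {V | ∃ M0 : Matrix (Fin p) (Fin p) ℝ, M0.PosDef ∧ matOpNorm M0 = σ ^ 2 ∧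
    V = blockDiag fun _ : Fin n => M0}

/-- Alternative-hypothesis parameter space, multivariate case. -/
def ThetaMulti (p n s : ℕ) (σ ρ : ℝ) : Set (Matrix (Fin n × Fin p) (Fin n × Fin p) ℝ) :=
  {V | ∃ t0 : ℕ, 1 ≤ t0 ∧ t0 ≤ n - 1 ∧ ∃ M1 M2 : Matrix (Fin p) (Fin p) ℝ,
    M1.PosDef ∧ M2.PosDef ∧ max (matOpNorm M1) (matOpNorm M2) ≤ σ ^ 2 ∧
    sparseEig s (M1 - M2) = matOpNorm (M1 - M2) ∧
    V = blockDiag (fun i : Fin n => if (i : ℕ) < t0 then M1 else M2) ∧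
    min (t0 : ℝ) ((n : ℝ) - t0) *
      min (matOpNorm (M1 - M2) / (σ ^ 2 - matOpNorm (M1 - M2)))
        ((matOpNorm (M1 - M2) / (σ ^ 2 - matOpNorm (M1 - M2))) ^ 2) = ρ}

/-- Null-hypothesis class of distributions, multivariate case. -/
def P0Multi (p n : ℕ) (u σ : ℝ) : Set (Measure (Fin n → Fin p → ℝ)) :=
  {μ | Assumption2 p n u μ ∧ fullCov μ ∈ Theta0Multi p n σ}

/-- Alternative-hypothesis class of distributions, multivariate case. -/
def PMulti (p n s : ℕ) (u σ ρ : ℝ) : Set (Measure (Fin n → Fin p → ℝ)) :=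
  {μ | Assumption2 p n u μ ∧ fullCov μ ∈ ThetaMulti p n s σ ρ}

/-- Minimax testing error, multivariate case. -/
def minimaxErrorMulti (p n s : ℕ) (u σ ρ : ℝ) : ℝ :=
  ⨅ ψ : {ψ : (Fin n → Fin p → ℝ) → ℝ // Measurable ψ ∧ ∀ x, ψ x = 0 ∨ ψ x = 1},
    ((⨆ μ' ∈ P0Multi p n u σ, ∫ x, ψ.1 x ∂μ') +
      ⨆ μ' ∈ PMulti p n s u σ ρ, ∫ x, (1 - ψ.1 x) ∂μ')

/-- Empirical covariance matrix of the first `t` observations. -/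
def hatSigma1 {p n : ℕ} (t : ℕ) (x : Fin n → Fin p → ℝ) : Matrix (Fin p) (Fin p) ℝ :=
  Matrix.of fun a b =>
    (t : ℝ)⁻¹ * ∑ i ∈ Finset.univ.filter (fun i : Fin n => (i : ℕ) < t), x i a * x i b

/-- Empirical covariance matrix of the last `t` observations. -/
def hatSigma2 {p n : ℕ} (t : ℕ) (x : Fin n → Fin p → ℝ) : Matrix (Fin p) (Fin p) ℝ :=
  Matrix.of fun a b =>
    (t : ℝ)⁻¹ * ∑ i ∈ Finset.univ.filter (fun i : Fin n => n - t ≤ (i : ℕ)), x i a * x i b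

/-- The statistic `S_{t,s}`. -/
def Sts {p n : ℕ} (t s : ℕ) (x : Fin n → Fin p → ℝ) : ℝ :=
  sparseEig s (hatSigma1 t x - hatSigma2 t x)

/-- The rate function `γ(p,n,s) = max(s log(ep/s), log log(8n))`. -/
def gammaPNS (p n s : ℕ) : ℝ :=
  max ((s : ℝ) * Real.log (Real.exp 1 * p / s)) (loglog8 n)

/-- The rate function `r(p,n,s,t)`. -/
def rPNST (p n s t : ℕ) : ℝ :=
  max (Real.sqrt (gammaPNS p n s / t)) (gammaPNS p n s / t)

/-- The multivariate changepoint test `ψ_λ` with known sparsity and noise level. -/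
def psiMulti (p n s : ℕ) (lam σ : ℝ) : (Fin n → Fin p → ℝ) → ℝ :=
  Set.indicator {x | ∃ t ∈ Tgrid n, lam * σ ^ 2 * rPNST p n s t < Sts t s x} 1

/-- The noise-level estimate `σ̂²_s`. -/
def sigHatS {p n : ℕ} (s : ℕ) (x : Fin n → Fin p → ℝ) : ℝ :=
  min (sparseEig s (hatSigma1 (⌈gammaPNS p n s⌉₊) x))
    (sparseEig s (hatSigma2 (⌈gammaPNS p n s⌉₊) x))

/-- The adaptive multivariate changepoint test `ψ_{adaptive,λ}`. -/
def psiAdaptive (p n : ℕ) (lam : ℝ) : (Fin n → Fin p → ℝ) → ℝ :=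
  Set.indicator {x | ∃ t ∈ Tgrid n, ∃ s ∈ Sgrid p, gammaPNS p n s ≤ (n : ℝ) ∧
    lam * sigHatS s x * rPNST p n s t < Sts t s x} 1

/-- The statistic `Ŝ_{t,s}` based on the SDP relaxation. -/
def ShatTS {p n : ℕ} (t s : ℕ) (x : Fin n → Fin p → ℝ) : ℝ :=
  sdpEig s (hatSigma1 t x - hatSigma2 t x)

/-- The rate function `β(p,n) = max(log(ep), log log(8n))`. -/
def betaPN (p n : ℕ) : ℝ := max (Real.log (Real.exp 1 * p)) (loglog8 n)

/-- The rate function `h(p,n,s,t)`. -/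
def hPNST (p n s t : ℕ) : ℝ :=
  (s : ℝ) * max (Real.sqrt (betaPN p n / t)) (betaPN p n / t)

/-- The noise-level estimate `σ̂²_con`. -/
def sigHatCon {p n : ℕ} (x : Fin n → Fin p → ℝ) : ℝ :=
  min (sdpEig 1 (hatSigma1 (⌈Real.log (Real.exp 1 * p)⌉₊) x))
    (sdpEig 1 (hatSigma2 (⌈Real.log (Real.exp 1 * p)⌉₊) x))

/-- The computationally tractable adaptive test `ψ̂_{adaptive,λ}`. -/
def psiHatAdaptive (p n : ℕ) (lam : ℝ) : (Fin n → Fin p → ℝ) → ℝ :=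
  Set.indicator {x | ∃ t ∈ Tgrid n, ∃ s ∈ Sgrid p,
    lam * sigHatCon x * hPNST p n s t < ShatTS t s x} 1

/-- Density of the centered multivariate Gaussian distribution `N(0, M)`. -/
def gaussDensity {d : Type*} [Fintype d] [DecidableEq d] (M : Matrix d d ℝ)
    (x : d → ℝ) : ℝ :=
  (2 * Real.pi) ^ (-(Fintype.card d : ℝ) / 2) * M.det ^ (-(1 : ℝ) / 2) *
    Real.exp (-(1 / 2) * (x ⬝ᵥ M⁻¹.mulVec x))

/-!
A maximal `1/4`-separated subset of the unit sphere of `ℝˢ` is a `1/4`-net of it, and the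
disjoint balls of radius `1/8` around its points lie in the ball of radius `9/8`, so it has at
most `9ˢ` points. Put a copy of such a net on each of the `C(p, s)` coordinate subspaces of
dimension `s`. If `A_S` is the compression of a symmetric `A` to one of them and `y` is a net
point within `1/4` of a unit vector `x`, then `xᵀA_Sx - yᵀA_Sy = (x - y)ᵀA_S(x + y)`; since the
operator norm of a symmetric matrix is the supremum of `|xᵀA_Sx|` over unit vectors, this gives
`‖A_S‖ ≤ K + ‖A_S‖ / 2` with `K` the maximum of `|yᵀAy|` over the net, i.e. `‖A_S‖ ≤ 2K`.
-/

open Metric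
open scoped NNReal ENNReal RealInnerProductSpace

theorem card_le_of_isSeparated_of_subset_closedBall {E : Type*} [NormedAddCommGroup E]
    [NormedSpace ℝ E] [FiniteDimensional ℝ E] {ε : ℝ≥0} (hε : 0 < ε) {C : Finset E}
    (hsep : IsSeparated (ε : ℝ≥0∞) (C : Set E)) (hC : (C : Set E) ⊆ closedBall 0 1) :
    (C.card : ℝ) ≤ (1 + 2 / ε) ^ Module.finrank ℝ E := by
  borelize E
  set μ : Measure E := Measure.addHaar
  set d := Module.finrank ℝ E
  have hr : (0 : ℝ) < ε / 2 := by positivity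
  have hdisj : (C : Set E).PairwiseDisjoint fun x => ball x (ε / 2) := by
    intro x hx y hy hxy
    refine ball_disjoint_ball ?_
    have : (ε : ℝ≥0∞) < edist x y := hsep hx hy hxy
    rw [edist_nndist, ENNReal.coe_lt_coe, ← NNReal.coe_lt_coe, coe_nndist] at this
    linarith
  have hsub : (⋃ x ∈ C, ball x (ε / 2)) ⊆ ball (0 : E) (1 + ε / 2) :=
    Set.iUnion₂_subset fun x hx => ball_subset_ball'
      (by linarith [mem_closedBall_zero_iff.mp (hC hx), dist_zero_right x])
  have hvol : (C.card : ℝ≥0∞) * ENNReal.ofReal ((ε / 2) ^ d) * μ (ball 0 1) ≤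
      ENNReal.ofReal ((1 + ε / 2) ^ d) * μ (ball 0 1) := by
    calc (C.card : ℝ≥0∞) * ENNReal.ofReal ((ε / 2) ^ d) * μ (ball 0 1)
        = ∑ x ∈ C, μ (ball x (ε / 2)) := by
          simp [Measure.addHaar_ball_of_pos μ _ hr, mul_assoc, d]
      _ = μ (⋃ x ∈ C, ball x (ε / 2)) :=
          (measure_biUnion_finset hdisj fun x _ => measurableSet_ball).symm
      _ ≤ μ (ball 0 (1 + ε / 2)) := measure_mono hsub
      _ = _ := Measure.addHaar_ball_of_pos μ _ (by positivity)
  have h0 : μ (ball 0 1) ≠ 0 := (measure_ball_pos μ _ one_pos).ne'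
  have htop : μ (ball 0 1) ≠ ⊤ := measure_ball_lt_top.ne
  rw [ENNReal.mul_le_mul_iff_left h0 htop, ← ENNReal.ofReal_natCast,
    ← ENNReal.ofReal_mul (by positivity), ENNReal.ofReal_le_ofReal_iff (by positivity)] at hvol
  calc (C.card : ℝ) = C.card * (ε / 2) ^ d / (ε / 2) ^ d := by field_simp
    _ ≤ (1 + ε / 2) ^ d / (ε / 2) ^ d := by gcongr
    _ = (1 + 2 / ε) ^ d := by rw [← div_pow]; congr 1; field_simp; ring

theorem packingNumber_le_of_subset_closedBall {E : Type*} [NormedAddCommGroup E]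
    [NormedSpace ℝ E] [FiniteDimensional ℝ E] {ε : ℝ≥0} (hε : 0 < ε) {A : Set E}
    (hA : A ⊆ closedBall 0 1) :
    packingNumber ε A ≤ ⌊(1 + 2 / (ε : ℝ)) ^ Module.finrank ℝ E⌋₊ := by
  refine iSup₂_le fun C hCA => iSup_le fun hsep => ?_
  set n := ⌊(1 + 2 / (ε : ℝ)) ^ Module.finrank ℝ E⌋₊
  by_contra! hlt
  obtain ⟨D, hDC, hDcard⟩ := Set.exists_subset_encard_eq (k := ((n + 1 : ℕ) : ℕ∞))
    (by exact_mod_cast Order.add_one_le_of_lt hlt)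
  have hD : D.Finite := Set.finite_of_encard_eq_coe hDcard
  have hbound := card_le_of_isSeparated_of_subset_closedBall hε (C := hD.toFinset)
    (by simpa using hsep.subset hDC) (by simpa using hDC.trans (hCA.trans hA))
  rw [← Set.ncard_eq_toFinset_card D hD, Set.ncard_def, hDcard, ENat.toNat_natCast] at hbound
  push_cast at hbound
  linarith [Nat.lt_floor_add_one ((1 + 2 / (ε : ℝ)) ^ Module.finrank ℝ E)]

theorem exists_finset_isCover_sphere {E : Type*} [NormedAddCommGroup E]
    [NormedSpace ℝ E] [FiniteDimensional ℝ E] {ε : ℝ≥0} (hε : 0 < ε) :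
    ∃ C : Finset E, (C : Set E) ⊆ sphere 0 1 ∧
      C.card ≤ ⌊(1 + 2 / (ε : ℝ)) ^ Module.finrank ℝ E⌋₊ ∧
      IsCover ε (sphere 0 1) (C : Set E) := by
  have hcov := (coveringNumber_le_packingNumber ε _).trans
    (packingNumber_le_of_subset_closedBall hε (sphere_subset_closedBall (x := (0 : E))))
  obtain ⟨C, hCA, hC, hcover, hcard⟩ :=
    exists_set_encard_eq_coveringNumber (ne_top_of_le_ne_top (by simp) hcov)
  refine ⟨hC.toFinset, by simpa using hCA, ?_, by simpa using hcover⟩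
  rw [← hcard, hC.encard_eq_coe_toFinset_card] at hcov
  exact_mod_cast hcov

theorem norm_le_of_isCover_sphere {E : Type*} [NormedAddCommGroup E] [InnerProductSpace ℝ E]
    {T : E →L[ℝ] E} (hT : (T : E →ₗ[ℝ] E).IsSymmetric) {ε : ℝ≥0} {N : Set E}
    (hN : N ⊆ sphere 0 1) (hcover : IsCover ε (sphere 0 1) N) {K : ℝ} (hK0 : 0 ≤ K)
    (hK : ∀ y ∈ N, |⟪T y, y⟫| ≤ K) :
    (1 - 2 * ε) * ‖T‖ ≤ K := by
  have hsphere : ∀ x ∈ sphere (0 : E) 1, |⟪T x, x⟫| ≤ K + 2 * ε * ‖T‖ := by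
    intro x hx
    obtain ⟨y, hyN, hxy⟩ := hcover hx
    replace hxy : ‖x - y‖ ≤ ε := by
      rw [← dist_eq_norm, ← coe_nndist, NNReal.coe_le_coe, ← edist_le_coe]; exact hxy
    have hx1 : ‖x‖ = 1 := by simpa using hx
    have hy1 : ‖y‖ = 1 := by simpa using hN hyN
    have hdiff : ⟪T x, x⟫ - ⟪T y, y⟫ = ⟪T (x - y), x + y⟫ := by
      have := hT x y
      simp only [ContinuousLinearMap.coe_coe] at this
      simp only [map_sub, inner_sub_left, inner_add_right, this, real_inner_comm x (T y)]
      ring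
    have hsum : ‖x + y‖ ≤ 2 := by linarith [norm_add_le x y]
    calc |⟪T x, x⟫| ≤ |⟪T y, y⟫| + |⟪T x, x⟫ - ⟪T y, y⟫| := by
          linarith [abs_sub_abs_le_abs_sub ⟪T x, x⟫ ⟪T y, y⟫]
      _ ≤ K + ‖T‖ * ‖x - y‖ * ‖x + y‖ := by
          gcongr
          · exact hK y hyN
          · rw [hdiff]
            exact (abs_real_inner_le_norm _ _).trans (by gcongr; exact T.le_opNorm _)
      _ ≤ K + ‖T‖ * ε * 2 := by gcongr
      _ = K + 2 * ε * ‖T‖ := by ring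
  have hrayleigh : ∀ x, |T.rayleighQuotient x| ≤ K + 2 * ε * ‖T‖ := by
    intro x
    rcases eq_or_ne x 0 with rfl | hx
    · simpa using by positivity
    have hu : ‖x‖⁻¹ • x ∈ sphere (0 : E) 1 := by simp [norm_smul, hx]
    rw [← T.rayleigh_smul x (inv_ne_zero (norm_ne_zero_iff.mpr hx))]
    simpa [ContinuousLinearMap.rayleighQuotient, ContinuousLinearMap.reApplyInnerSelf_apply,
      mem_sphere_zero_iff_norm.mp hu] using hsphere _ hu
  have := (T.norm_eq_iSup_rayleighQuotient hT).trans_le (ciSup_le hrayleigh)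
  linarith

section Support
variable {ι : Type*} {S : Finset ι}

theorem sum_eq_sum_coe_of_eq_zero [Fintype ι] {M : Type*} [AddCommMonoid M] {f : ι → M}
    (hf : ∀ i ∉ S, f i = 0) :
    ∑ i, f i = ∑ i : S, f i := by
  rw [Finset.sum_coe_sort, Finset.sum_subset (S.subset_univ) fun i _ hi => hf i hi]

theorem exists_card_eq_of_ncard_support_le [Fintype ι] {v : ι → ℝ} {s : ℕ}
    (hv : {i | v i ≠ 0}.ncard ≤ s) (hs : s ≤ Fintype.card ι) :
    ∃ S : Finset ι, S.card = s ∧ ∀ i ∉ S, v i = 0 := by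
  have hsupp : (Finset.univ.filter fun i => v i ≠ 0).card ≤ s := by
    rw [← Set.ncard_coe_finset, Finset.coe_filter]
    simpa using hv
  obtain ⟨S, hsub, hcard⟩ := Finset.exists_superset_card_eq hsupp hs
  exact ⟨S, hcard, fun i hi => by_contra fun h => hi (hsub (by simpa using h))⟩

def euclideanRestrict (S : Finset ι) (v : ι → ℝ) : EuclideanSpace ℝ S :=
  WithLp.toLp 2 fun i => v i

theorem sum_sq_eq_norm_euclideanRestrict_sq [Fintype ι] {v : ι → ℝ} (hv : ∀ i ∉ S, v i = 0) :
    ∑ i, v i ^ 2 = ‖euclideanRestrict S v‖ ^ 2 := by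
  rw [EuclideanSpace.real_norm_sq_eq]
  exact sum_eq_sum_coe_of_eq_zero fun i hi => by simp [hv i hi]

variable [DecidableEq ι]

def extendByZero (S : Finset ι) (x : EuclideanSpace ℝ S) : ι → ℝ :=
  fun i => if h : i ∈ S then x ⟨i, h⟩ else 0

theorem extendByZero_of_notMem (x : EuclideanSpace ℝ S) {i : ι} (hi : i ∉ S) :
    extendByZero S x i = 0 :=
  dif_neg hi

@[simp]
theorem euclideanRestrict_extendByZero (x : EuclideanSpace ℝ S) :
    euclideanRestrict S (extendByZero S x) = x := by
  ext i
  simp [euclideanRestrict, extendByZero]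

theorem ncard_support_extendByZero_le (x : EuclideanSpace ℝ S) :
    {i | extendByZero S x i ≠ 0}.ncard ≤ S.card := by
  rw [← Set.ncard_coe_finset S]
  exact Set.ncard_le_ncard (fun i hi => by_contra fun hiS => hi (extendByZero_of_notMem x hiS))
    S.finite_toSet

variable [Fintype ι] variable {v : ι → ℝ} (hv : ∀ i ∉ S, v i = 0)
include hv

theorem dotProduct_mulVec_eq_inner_euclideanRestrict (A : Matrix ι ι ℝ) :
    v ⬝ᵥ A *ᵥ v = ⟪toEuclideanCLM (𝕜 := ℝ) (A.submatrix (↑) (↑)) (euclideanRestrict S v),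
      euclideanRestrict S v⟫ := by
  rw [euclideanRestrict, toEuclideanCLM_toLp, EuclideanSpace.inner_eq_star_dotProduct]
  simp only [dotProduct, mulVec, star_trivial, submatrix_apply]
  rw [sum_eq_sum_coe_of_eq_zero fun i hi => by simp [hv i hi]]
  refine Finset.sum_congr rfl fun i _ => ?_
  rw [sum_eq_sum_coe_of_eq_zero (S := S) fun j hj => by simp [hv j hj]]

theorem mul_abs_dotProduct_mulVec_le_of_isCover {A : Matrix ι ι ℝ} (hA : A.IsSymm) {ε : ℝ≥0}
    {C : Set (EuclideanSpace ℝ S)} (hC : C ⊆ sphere 0 1) (hcover : IsCover ε (sphere 0 1) C)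
    {K : ℝ} (hK0 : 0 ≤ K) (hK : ∀ y ∈ C, |extendByZero S y ⬝ᵥ A *ᵥ extendByZero S y| ≤ K)
    (hv1 : ∑ i, v i ^ 2 = 1) :
    (1 - 2 * ε) * |v ⬝ᵥ A *ᵥ v| ≤ K := by
  set T := toEuclideanCLM (𝕜 := ℝ) (A.submatrix ((↑) : S → ι) (↑))
  have hT : (T : EuclideanSpace ℝ S →ₗ[ℝ] EuclideanSpace ℝ S).IsSymmetric :=
    isSymmetric_toEuclideanLin_iff.mpr (isHermitian_iff_isSymm.mpr (hA.submatrix _))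
  have hnorm := norm_le_of_isCover_sphere hT hC hcover hK0 fun y hy => by
    simpa [dotProduct_mulVec_eq_inner_euclideanRestrict
      (fun i hi => extendByZero_of_notMem y hi)] using hK y hy
  set x := euclideanRestrict S v
  have hx : ‖x‖ = 1 := by
    refine (sq_eq_sq₀ (norm_nonneg x) zero_le_one).mp ?_
    rw [one_pow, ← hv1, sum_sq_eq_norm_euclideanRestrict_sq hv]
  have hq : |v ⬝ᵥ A *ᵥ v| ≤ ‖T‖ := by
    rw [dotProduct_mulVec_eq_inner_euclideanRestrict hv]
    calc |⟪T x, x⟫| ≤ ‖T x‖ * ‖x‖ := abs_real_inner_le_norm _ _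
      _ ≤ ‖T‖ * ‖x‖ * ‖x‖ := by gcongr; exact T.le_opNorm x
      _ = ‖T‖ := by rw [hx]; ring
  rcases le_total 0 (1 - 2 * (ε : ℝ)) with h | h
  · exact (mul_le_mul_of_nonneg_left hq h).trans hnorm
  · nlinarith [abs_nonneg (v ⬝ᵥ A *ᵥ v)]

end Support

section SparseNet
variable {ι : Type*} [Fintype ι] [DecidableEq ι] (s : ℕ)
  (net : ∀ S : Finset ι, Finset (EuclideanSpace ℝ S))

def sparseNet : Finset (ι → ℝ) :=
  (Finset.univ.powersetCard s).biUnion fun S => (net S).image (extendByZero S)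

variable {s net}

theorem mem_sparseNet {v : ι → ℝ} :
    v ∈ sparseNet s net ↔ ∃ S : Finset ι, S.card = s ∧ ∃ y ∈ net S, extendByZero S y = v := by
  simp [sparseNet, Finset.mem_powersetCard]

theorem card_sparseNet_le {m : ℕ} (hm : ∀ S : Finset ι, S.card = s → (net S).card ≤ m) :
    (sparseNet s net).card ≤ (Fintype.card ι).choose s * m := by
  calc (sparseNet s net).card
      ≤ ∑ S ∈ Finset.univ.powersetCard s, ((net S).image (extendByZero S)).card :=
        Finset.card_biUnion_le
    _ ≤ ∑ S ∈ Finset.univ.powersetCard s, m := Finset.sum_le_sum fun S hS =>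
        Finset.card_image_le.trans (hm S (Finset.mem_powersetCard.mp hS).2)
    _ = (Fintype.card ι).choose s * m := by simp

theorem sum_sq_eq_one_and_ncard_le_of_mem_sparseNet
    (hnet : ∀ S : Finset ι, (net S : Set (EuclideanSpace ℝ S)) ⊆ sphere 0 1) {v : ι → ℝ}
    (hv : v ∈ sparseNet s net) :
    ∑ i, v i ^ 2 = 1 ∧ {i | v i ≠ 0}.ncard ≤ s := by
  obtain ⟨S, rfl, y, hy, rfl⟩ := mem_sparseNet.mp hv
  refine ⟨?_, ncard_support_extendByZero_le y⟩
  rw [sum_sq_eq_norm_euclideanRestrict_sq fun i hi => extendByZero_of_notMem y hi,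
    euclideanRestrict_extendByZero, mem_sphere_zero_iff_norm.mp (hnet S hy), one_pow]

theorem mul_abs_dotProduct_mulVec_le_sSup_sparseNet {A : Matrix ι ι ℝ} (hA : A.IsSymm)
    {ε : ℝ≥0} (hnet : ∀ S : Finset ι, (net S : Set (EuclideanSpace ℝ S)) ⊆ sphere 0 1)
    (hcover : ∀ S : Finset ι, IsCover ε (sphere 0 1) (net S : Set (EuclideanSpace ℝ S)))
    (hs : s ≤ Fintype.card ι) {v : ι → ℝ} (hv1 : ∑ i, v i ^ 2 = 1)
    (hvs : {i | v i ≠ 0}.ncard ≤ s) :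
    (1 - 2 * ε) * |v ⬝ᵥ A *ᵥ v| ≤ sSup ((fun w => |w ⬝ᵥ A *ᵥ w|) '' ↑(sparseNet s net)) := by
  obtain ⟨S, hS, hvS⟩ := exists_card_eq_of_ncard_support_le hvs hs
  refine mul_abs_dotProduct_mulVec_le_of_isCover hvS hA (hnet S) (hcover S)
    (Real.sSup_nonneg (by rintro _ ⟨w, -, rfl⟩; exact abs_nonneg _)) (fun y hy => ?_) hv1
  exact le_csSup ((sparseNet s net).finite_toSet.image _).bddAbove
    ⟨_, mem_sparseNet.mpr ⟨S, hS, y, hy, rfl⟩, rfl⟩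

end SparseNet

theorem sparse_net_general (p s : ℕ) (hsp : s ≤ p) :
    ∃ N : Finset (Fin p → ℝ),
      (∀ v ∈ N, (∑ j, v j ^ 2) = 1 ∧ {j | v j ≠ 0}.ncard ≤ s) ∧
      N.card ≤ p.choose s * 9 ^ s ∧
      ∀ A : Matrix (Fin p) (Fin p) ℝ, A.IsSymm →
        sparseEig s A ≤ 2 * sSup ((fun v => abs (v ⬝ᵥ A.mulVec v)) '' ↑N) := by
  choose net hnet_sphere hnet_card hnet_cover using fun S : Finset (Fin p) =>
    exists_finset_isCover_sphere (E := EuclideanSpace ℝ S) (ε := 1 / 4) (by norm_num)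
  have h9 : ∀ n : ℕ, ⌊((1 : ℝ) + 2 / ((1 / 4 : ℝ≥0) : ℝ)) ^ n⌋₊ = 9 ^ n := fun n => by
    rw [show (1 : ℝ) + 2 / ((1 / 4 : ℝ≥0) : ℝ) = 9 by norm_num, ← Nat.cast_ofNat, ← Nat.cast_pow,
      Nat.floor_natCast]
  refine ⟨sparseNet s net, fun v hv => sum_sq_eq_one_and_ncard_le_of_mem_sparseNet hnet_sphere hv,
    ?_, fun A hA => ?_⟩
  · refine (card_sparseNet_le (m := 9 ^ s) fun S hS => (hnet_card S).trans_eq ?_).trans_eq (by simp)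
    rw [finrank_euclideanSpace, Fintype.card_coe, hS, h9]
  · refine Real.sSup_le (fun _ ⟨v, hv1, hvs, hr⟩ => hr ▸ ?_) ?_
    · have := mul_abs_dotProduct_mulVec_le_sSup_sparseNet hA hnet_sphere hnet_cover
        (by simpa using hsp) hv1 hvs
      norm_num at this
      linarith
    · exact mul_nonneg zero_le_two (Real.sSup_nonneg (by rintro _ ⟨w, -, rfl⟩; exact abs_nonneg _))

/-- a sparse net for the `s`-sparse eigenvalue problem
(the covering claim in the proof of Lemma 2 of the paper). -/
theorem sparse_net (p s : ℕ) (hs : 1 ≤ s) (hsp : s ≤ p) :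
    ∃ N : Finset (Fin p → ℝ),
      (∀ v ∈ N, (∑ j, v j ^ 2) = 1 ∧ {j | v j ≠ 0}.ncard ≤ s) ∧
      N.card ≤ p.choose s * 9 ^ s ∧
      ∀ A : Matrix (Fin p) (Fin p) ℝ, A.IsSymm →
        sparseEig s A ≤ 2 * sSup ((fun v => abs (v ⬝ᵥ A.mulVec v)) '' ↑N) :=
  sparse_net_general p s hsp

end CovCP
end
end

section
/- Let A ∈ ℝ^{p×p} be symmetric and s ∈ [p]. Then sup_{Z ∈ N(p,s)} Tr(AZ) ≤ inf over symmetric Y ∈ ℝ^{p×p} of [ sup_{Z ⪰ 0, Tr(Z)=1} Tr(Z(A+Y)) + s·‖Y‖_∞ ] ≤ inf over symmetric Y ∈ ℝ^{p×p} of [ λ_max(A+Y) + s·‖Y‖_∞ ], where N(p,s) = { Z ∈ ℝ^{p×p} : Z ⪰ 0, Tr(Z) = 1, ‖Z‖₁ ≤ s }. -/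
open MeasureTheory ProbabilityTheory Real Matrix

noncomputable section

namespace CovCP

/-!
For `Z ∈ N(p,s)` and any `Y`, split `Tr(AZ) = Tr((A+Y)Z) - Tr(YZ)`: the first term is at most
`sup {Tr((A+Y)Z') : Z' ⪰ 0, Tr Z' = 1}`, and by Hölder `|Tr(YZ)| ≤ ‖Z‖₁ ‖Y‖_∞ ≤ s ‖Y‖_∞`.
The second inequality holds termwise: factoring `Z = BᵀB` gives
`Tr(MZ) = ∑ᵢ bᵢᵀ M bᵢ ≤ λ_max(M) ∑ᵢ ‖bᵢ‖² = λ_max(M) Tr Z`.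
The matrix units `Z = eᵢeᵢᵀ`, with `‖Z‖₁ = 1 ≤ s`, make every supremum range over a nonempty
set and bound every term of the infima below by `A₀₀`, so no junk value of `sSup`/`⨅` enters.
-/

section TraceBounds

variable {n : Type*}

def maxAbsEntry (Y : Matrix n n ℝ) : ℝ := ⨆ i, ⨆ j, |Y i j|

theorem maxAbsEntry_nonneg (Y : Matrix n n ℝ) : 0 ≤ maxAbsEntry Y :=
  Real.iSup_nonneg fun _ => Real.iSup_nonneg fun _ => abs_nonneg _

variable [Fintype n]

theorem abs_le_maxAbsEntry (Y : Matrix n n ℝ) (i j : n) : |Y i j| ≤ maxAbsEntry Y :=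
  (le_ciSup (Set.finite_range _).bddAbove j).trans
    (le_ciSup (f := fun i => ⨆ j, |Y i j|) (Set.finite_range _).bddAbove i)

theorem abs_trace_mul_le (Y Z : Matrix n n ℝ) :
    |(Y * Z).trace| ≤ (∑ i, ∑ j, |Z i j|) * maxAbsEntry Y := by
  calc |(Y * Z).trace| = |∑ i, ∑ j, Y i j * Z j i| := rfl
    _ ≤ ∑ i, ∑ j, |Y i j * Z j i| := (Finset.abs_sum_le_sum_abs _ _).trans
        (Finset.sum_le_sum fun i _ => Finset.abs_sum_le_sum_abs _ _)
    _ ≤ ∑ i, ∑ j, maxAbsEntry Y * |Z j i| := by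
        refine Finset.sum_le_sum fun i _ => Finset.sum_le_sum fun j _ => ?_
        rw [abs_mul]
        exact mul_le_mul_of_nonneg_right (abs_le_maxAbsEntry Y i j) (abs_nonneg _)
    _ = (∑ i, ∑ j, |Z i j|) * maxAbsEntry Y := by
        rw [Finset.sum_comm, mul_comm, Finset.mul_sum]
        simp only [Finset.mul_sum]

theorem dotProduct_mulVec_le_sum_abs_mul (M : Matrix n n ℝ) (v : n → ℝ) :
    v ⬝ᵥ M *ᵥ v ≤ (∑ i, ∑ j, |M i j|) * (v ⬝ᵥ v) := by
  have hvv : 0 ≤ v ⬝ᵥ v := by simpa using dotProduct_self_star_nonneg v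
  have hcoord : ∀ i, |v i| ≤ √(v ⬝ᵥ v) := fun i =>
    Real.abs_le_sqrt <| by
      simpa only [dotProduct, sq] using
        Finset.single_le_sum (f := fun j => v j * v j) (fun j _ => mul_self_nonneg _)
          (Finset.mem_univ i)
  calc v ⬝ᵥ M *ᵥ v = ∑ i, ∑ j, v i * M i j * v j := by
        simp only [dotProduct, mulVec, Finset.mul_sum, mul_assoc]
    _ ≤ ∑ i, ∑ j, |M i j| * (√(v ⬝ᵥ v) * √(v ⬝ᵥ v)) := by
        refine Finset.sum_le_sum fun i _ => Finset.sum_le_sum fun j _ => ?_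
        calc v i * M i j * v j ≤ |v i * M i j * v j| := le_abs_self _
          _ = |M i j| * (|v i| * |v j|) := by simp only [abs_mul]; ring
          _ ≤ _ := by gcongr; exacts [hcoord i, hcoord j]
    _ = (∑ i, ∑ j, |M i j|) * (v ⬝ᵥ v) := by
        rw [Real.mul_self_sqrt hvv, Finset.sum_mul]
        simp only [Finset.sum_mul]

open scoped MatrixOrder in
theorem trace_mul_le_of_dotProduct_mulVec_le {M Z : Matrix n n ℝ} (hZ : Z.PosSemidef) {c : ℝ}
    (hM : ∀ v, v ⬝ᵥ M *ᵥ v ≤ c * (v ⬝ᵥ v)) : (M * Z).trace ≤ c * Z.trace := by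
  classical
  obtain ⟨B, rfl⟩ := CStarAlgebra.nonneg_iff_eq_star_mul_self.mp hZ.nonneg
  calc (M * (star B * B)).trace = ∑ i, B i ⬝ᵥ M *ᵥ B i := by
        rw [← Matrix.mul_assoc, trace_mul_comm, ← Matrix.mul_assoc]
        simp [trace, mul_mul_apply, star_eq_conjTranspose]
    _ ≤ ∑ i, c * (B i ⬝ᵥ B i) := Finset.sum_le_sum fun i _ => hM (B i)
    _ = c * (star B * B).trace := by
        rw [trace_mul_comm, ← Finset.mul_sum]
        simp [trace, mul_apply, dotProduct]

end TraceBounds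

section DiagonalSingle

variable {n : Type*} [DecidableEq n] (i : n)

theorem posSemidef_diagonal_single : (diagonal (Pi.single i (1 : ℝ))).PosSemidef :=
  PosSemidef.diagonal (Pi.single_nonneg.mpr zero_le_one)

variable [Fintype n]

theorem trace_diagonal_single : (diagonal (Pi.single i (1 : ℝ))).trace = 1 := by
  simp

theorem sum_abs_diagonal_single : ∑ j, ∑ k, |diagonal (Pi.single i (1 : ℝ)) j k| = 1 := by
  simp [diagonal_apply, Pi.single_apply, apply_ite (abs : ℝ → ℝ)]

theorem trace_mul_diagonal_single (M : Matrix n n ℝ) :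
    (M * diagonal (Pi.single i 1)).trace = M i i := by
  simp [trace, mul_diagonal, Pi.single_apply]

end DiagonalSingle

section LamMaxSDP

variable {n : Type*} [Fintype n]

def lamMaxSDP (M : Matrix n n ℝ) : ℝ :=
  sSup {r : ℝ | ∃ Z : Matrix n n ℝ, Z.PosSemidef ∧ Z.trace = 1 ∧ r = (M * Z).trace}

theorem trace_mul_le_lamMaxSDP {M Z : Matrix n n ℝ} (hZ : Z.PosSemidef) (htr : Z.trace = 1) :
    (M * Z).trace ≤ lamMaxSDP M := by
  refine le_csSup ⟨∑ i, ∑ j, |M i j|, ?_⟩ ⟨Z, hZ, htr, rfl⟩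
  rintro _ ⟨Z, hZ, htr, rfl⟩
  simpa [htr] using trace_mul_le_of_dotProduct_mulVec_le hZ (dotProduct_mulVec_le_sum_abs_mul M)

theorem diag_le_lamMaxSDP (M : Matrix n n ℝ) (i : n) : M i i ≤ lamMaxSDP M := by
  classical
  simpa only [trace_mul_diagonal_single] using
    trace_mul_le_lamMaxSDP (M := M) (posSemidef_diagonal_single i) (trace_diagonal_single i)

theorem trace_mul_le_lamMaxSDP_add (A Y : Matrix n n ℝ) {Z : Matrix n n ℝ}
    (hZ : Z.PosSemidef) (htr : Z.trace = 1) {s : ℝ} (hZs : ∑ i, ∑ j, |Z i j| ≤ s) :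
    (A * Z).trace ≤ lamMaxSDP (A + Y) + s * maxAbsEntry Y := by
  have hsplit : ((A + Y) * Z).trace = (A * Z).trace + (Y * Z).trace := by
    rw [add_mul, trace_add]
  have hholder : |(Y * Z).trace| ≤ s * maxAbsEntry Y :=
    (abs_trace_mul_le Y Z).trans (mul_le_mul_of_nonneg_right hZs (maxAbsEntry_nonneg Y))
  linarith [trace_mul_le_lamMaxSDP (M := A + Y) hZ htr, neg_abs_le (Y * Z).trace]

theorem diag_le_lamMaxSDP_add (A Y : Matrix n n ℝ) (i : n) {s : ℝ} (hs : 1 ≤ s) :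
    A i i ≤ lamMaxSDP (A + Y) + s * maxAbsEntry Y := by
  have hY : |Y i i| ≤ s * maxAbsEntry Y :=
    (abs_le_maxAbsEntry Y i i).trans (le_mul_of_one_le_left (maxAbsEntry_nonneg Y) hs)
  linarith [diag_le_lamMaxSDP (A + Y) i, add_apply A Y i i, neg_abs_le (Y i i)]

end LamMaxSDP

section LamMaxSym

variable {p : ℕ}

theorem dotProduct_mulVec_le_lamMaxSym (M : Matrix (Fin p) (Fin p) ℝ) (v : Fin p → ℝ) :
    v ⬝ᵥ M *ᵥ v ≤ lamMaxSym M * (v ⬝ᵥ v) := by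
  have hsq : ∀ u : Fin p → ℝ, ∑ j, u j ^ 2 = u ⬝ᵥ u := fun u => by simp [dotProduct, sq]
  have hbdd : BddAbove {r : ℝ | ∃ u : Fin p → ℝ, ∑ j, u j ^ 2 = 1 ∧ r = u ⬝ᵥ M *ᵥ u} := by
    refine ⟨∑ i, ∑ j, |M i j|, ?_⟩
    rintro _ ⟨u, hu, rfl⟩
    simpa [← hsq u, hu] using dotProduct_mulVec_le_sum_abs_mul M u
  rcases (by simpa using dotProduct_self_star_nonneg v : 0 ≤ v ⬝ᵥ v).eq_or_lt
    with hzero | hpos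
  · simp [dotProduct_self_eq_zero.mp hzero.symm]
  set t := √(v ⬝ᵥ v)
  have ht : t * t = v ⬝ᵥ v := Real.mul_self_sqrt hpos.le
  have htpos : 0 < t := Real.sqrt_pos.mpr hpos
  set u := t⁻¹ • v
  have hv : v = t • u := by simp [u, smul_smul, htpos.ne']
  have hu : ∑ j, u j ^ 2 = 1 := by
    rw [hsq, dotProduct_smul, smul_dotProduct, ← ht, smul_eq_mul, smul_eq_mul]
    field_simp
  calc v ⬝ᵥ M *ᵥ v = (t * t) * (u ⬝ᵥ M *ᵥ u) := by
        rw [hv, mulVec_smul, dotProduct_smul, smul_dotProduct, smul_eq_mul, smul_eq_mul]; ring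
    _ ≤ (t * t) * lamMaxSym M := by gcongr; exact le_csSup hbdd ⟨u, hu, rfl⟩
    _ = lamMaxSym M * (v ⬝ᵥ v) := by rw [ht, mul_comm]

theorem lamMaxSDP_le_lamMaxSym [NeZero p] (M : Matrix (Fin p) (Fin p) ℝ) :
    lamMaxSDP M ≤ lamMaxSym M := by
  refine csSup_le ⟨_, _, posSemidef_diagonal_single 0, trace_diagonal_single 0, rfl⟩ ?_
  rintro _ ⟨Z, hZ, htr, rfl⟩
  simpa [htr] using trace_mul_le_of_dotProduct_mulVec_le hZ (dotProduct_mulVec_le_lamMaxSym M)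

end LamMaxSym

theorem sdp_duality_general (p s : ℕ) (hs : 1 ≤ s) (hsp : s ≤ p)
    (A : Matrix (Fin p) (Fin p) ℝ) :
    (sSup {r : ℝ | ∃ Z : Matrix (Fin p) (Fin p) ℝ, Z.PosSemidef ∧ Z.trace = 1 ∧
        (∑ i, ∑ j, abs (Z i j)) ≤ (s : ℝ) ∧ r = (A * Z).trace} ≤
      ⨅ Y : {Y : Matrix (Fin p) (Fin p) ℝ // Y.IsSymm},
        (sSup {r : ℝ | ∃ Z : Matrix (Fin p) (Fin p) ℝ, Z.PosSemidef ∧ Z.trace = 1 ∧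
            r = ((A + Y.1) * Z).trace} + (s : ℝ) * ⨆ i, ⨆ j, abs (Y.1 i j))) ∧
    ((⨅ Y : {Y : Matrix (Fin p) (Fin p) ℝ // Y.IsSymm},
        (sSup {r : ℝ | ∃ Z : Matrix (Fin p) (Fin p) ℝ, Z.PosSemidef ∧ Z.trace = 1 ∧
            r = ((A + Y.1) * Z).trace} + (s : ℝ) * ⨆ i, ⨆ j, abs (Y.1 i j))) ≤
      ⨅ Y : {Y : Matrix (Fin p) (Fin p) ℝ // Y.IsSymm},
        (lamMaxSym (A + Y.1) + (s : ℝ) * ⨆ i, ⨆ j, abs (Y.1 i j))) := by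
  have : NeZero p := ⟨by omega⟩
  have : Nonempty {Y : Matrix (Fin p) (Fin p) ℝ // Y.IsSymm} := ⟨⟨0, isSymm_zero⟩⟩
  have hs' : (1 : ℝ) ≤ s := by exact_mod_cast hs
  refine ⟨csSup_le ⟨_, _, posSemidef_diagonal_single 0, trace_diagonal_single 0,
      (sum_abs_diagonal_single 0).trans_le hs', rfl⟩ ?_,
    ciInf_mono ⟨A 0 0, ?_⟩ fun Y => add_le_add_left (lamMaxSDP_le_lamMaxSym _) _⟩
  · rintro _ ⟨Z, hZ, htr, hZs, rfl⟩
    exact le_ciInf fun Y => trace_mul_le_lamMaxSDP_add A Y.1 hZ htr hZs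
  · rintro _ ⟨Y, rfl⟩
    exact diag_le_lamMaxSDP_add A Y.1 0 hs'

/-- weak duality for the SDP relaxation of the sparse eigenvalue
problem (Lemma 11 of the paper). -/
theorem sdp_duality (p s : ℕ) (hs : 1 ≤ s) (hsp : s ≤ p)
    (A : Matrix (Fin p) (Fin p) ℝ) (hA : A.IsSymm) :
    (sSup {r : ℝ | ∃ Z : Matrix (Fin p) (Fin p) ℝ, Z.PosSemidef ∧ Z.trace = 1 ∧
        (∑ i, ∑ j, abs (Z i j)) ≤ (s : ℝ) ∧ r = (A * Z).trace} ≤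
      ⨅ Y : {Y : Matrix (Fin p) (Fin p) ℝ // Y.IsSymm},
        (sSup {r : ℝ | ∃ Z : Matrix (Fin p) (Fin p) ℝ, Z.PosSemidef ∧ Z.trace = 1 ∧
            r = ((A + Y.1) * Z).trace} + (s : ℝ) * ⨆ i, ⨆ j, abs (Y.1 i j))) ∧
    ((⨅ Y : {Y : Matrix (Fin p) (Fin p) ℝ // Y.IsSymm},
        (sSup {r : ℝ | ∃ Z : Matrix (Fin p) (Fin p) ℝ, Z.PosSemidef ∧ Z.trace = 1 ∧
            r = ((A + Y.1) * Z).trace} + (s : ℝ) * ⨆ i, ⨆ j, abs (Y.1 i j))) ≤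
      ⨅ Y : {Y : Matrix (Fin p) (Fin p) ℝ // Y.IsSymm},
        (lamMaxSym (A + Y.1) + (s : ℝ) * ⨆ i, ⨆ j, abs (Y.1 i j))) :=
  sdp_duality_general p s hs hsp A

end CovCP
end
end

section
/- Let Σ ∈ ℝ^{p×p} be symmetric positive definite. Then: (i) the map s ↦ λ_max^s(Σ) is non-decreasing in s ∈ [p]; (ii) for any s, s0 with s0/2 ≤ s ≤ s0 ≤ p, λ_max^{s0}(Σ) ≤ 4·λ_max^s(Σ); and (iii) if Σ1, Σ2 ∈ ℝ^{p×p} are both symmetric positive definite, then for any s ∈ [p], λ_max^s(Σ1 − Σ2) ≤ max(λ_max^s(Σ1), λ_max^s(Σ2)). -/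
open MeasureTheory ProbabilityTheory Real Matrix

noncomputable section

/-!
Each `sparseEig s A` is a supremum of `|vᵀ A v|` over `s`-sparse unit vectors, so it is monotone
in `s`. For positive semidefinite `M` and `s₀ ≤ 2 s`, an `s₀`-sparse unit vector splits as
`v₁ + v₂` with disjoint supports of size at most `s`, and the parallelogram identity gives
`vᵀ M v ≤ 2 (v₁ᵀ M v₁ + v₂ᵀ M v₂) ≤ 2 λₛ(M) (‖v₁‖² + ‖v₂‖²) = 2 λₛ(M)`, better than the claimed
factor `4`. Finally `vᵀ (M₁ - M₂) v` is a difference of two numbers in `[0, λₛ(Mᵢ)]`.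
-/

lemma abs_le_one_of_sum_sq_eq_one {ι : Type*} [Fintype ι] {v : ι → ℝ}
    (hv : ∑ j, v j ^ 2 = 1) (i : ι) : |v i| ≤ 1 := by
  rw [← sq_le_one_iff_abs_le_one, ← hv]
  exact Finset.single_le_sum (fun j _ => sq_nonneg (v j)) (Finset.mem_univ i)

lemma Matrix.abs_dotProduct_mulVec_le_sum_abs {ι : Type*} [Fintype ι] (A : Matrix ι ι ℝ)
    {v : ι → ℝ} (hv : ∑ j, v j ^ 2 = 1) : |v ⬝ᵥ A *ᵥ v| ≤ ∑ i, ∑ j, |A i j| := by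
  have hentry : ∀ i j, |v i * (A i j * v j)| ≤ |A i j| := fun i j => by
    rw [abs_mul, abs_mul]
    calc |v i| * (|A i j| * |v j|) ≤ |A i j| * |v j| :=
          mul_le_of_le_one_left (by positivity) (abs_le_one_of_sum_sq_eq_one hv i)
      _ ≤ |A i j| := mul_le_of_le_one_right (abs_nonneg _) (abs_le_one_of_sum_sq_eq_one hv j)
  simp only [dotProduct, mulVec, Finset.mul_sum]
  exact (Finset.abs_sum_le_sum_abs _ _).trans <| Finset.sum_le_sum fun i _ =>
    (Finset.abs_sum_le_sum_abs _ _).trans <| Finset.sum_le_sum fun j _ => hentry i j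

/-- Parallelogram identity for `x ↦ xᵀ M x`, dropping `(x - y)ᵀ M (x - y) ≥ 0`. -/
lemma Matrix.PosSemidef.dotProduct_mulVec_add_le {ι : Type*} [Fintype ι]
    {M : Matrix ι ι ℝ} (hM : M.PosSemidef) (x y : ι → ℝ) :
    (x + y) ⬝ᵥ M *ᵥ (x + y) ≤ 2 * (x ⬝ᵥ M *ᵥ x + y ⬝ᵥ M *ᵥ y) := by
  have h := hM.dotProduct_mulVec_nonneg (x - y)
  simp only [star_trivial, mulVec_add, mulVec_sub, dotProduct_add, dotProduct_sub, add_dotProduct,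
    sub_dotProduct] at h ⊢
  linarith

lemma exists_set_ncard_support_indicator_le {ι M : Type*} [Finite ι] [Zero M] {v : ι → M}
    {s t : ℕ} (hv : {j | v j ≠ 0}.ncard ≤ s + t) :
    ∃ T : Set ι, {j | T.indicator v j ≠ 0}.ncard ≤ s ∧ {j | Tᶜ.indicator v j ≠ 0}.ncard ≤ t := by
  obtain ⟨T, hTsupp, hTcard⟩ :=
    Set.exists_subset_card_eq (min_le_right s (Function.support v).ncard)
  refine ⟨T, ?_, ?_⟩
  · change (Function.support _).ncard ≤ s
    rw [Set.support_indicator, Set.inter_eq_left.mpr hTsupp, hTcard]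
    exact min_le_left _ _
  · change (Function.support _).ncard ≤ t
    rw [Set.support_indicator, ← Set.sdiff_eq_compl_inter, Set.ncard_sdiff hTsupp, hTcard]
    change (Function.support v).ncard ≤ s + t at hv
    omega

namespace CovCP

variable {p : ℕ}

lemma sparseEig_nonneg (s : ℕ) (A : Matrix (Fin p) (Fin p) ℝ) : 0 ≤ sparseEig s A :=
  Real.sSup_nonneg <| by
    rintro _ ⟨v, -, -, rfl⟩
    exact abs_nonneg _

lemma abs_dotProduct_mulVec_le_sparseEig (A : Matrix (Fin p) (Fin p) ℝ) {s : ℕ}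
    {v : Fin p → ℝ} (hv : ∑ j, v j ^ 2 = 1) (hs : {j | v j ≠ 0}.ncard ≤ s) :
    |v ⬝ᵥ A *ᵥ v| ≤ sparseEig s A := by
  refine le_csSup ⟨∑ i, ∑ j, |A i j|, ?_⟩ ⟨v, hv, hs, rfl⟩
  rintro _ ⟨u, hu, -, rfl⟩
  exact A.abs_dotProduct_mulVec_le_sum_abs hu

lemma sparseEig_le_of_forall {A : Matrix (Fin p) (Fin p) ℝ} {s : ℕ} {c : ℝ} (hc : 0 ≤ c)
    (h : ∀ v : Fin p → ℝ, ∑ j, v j ^ 2 = 1 → {j | v j ≠ 0}.ncard ≤ s → |v ⬝ᵥ A *ᵥ v| ≤ c) :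
    sparseEig s A ≤ c :=
  Real.sSup_le (by rintro _ ⟨v, hv, hs, rfl⟩; exact h v hv hs) hc

lemma abs_dotProduct_mulVec_le_sparseEig_mul (A : Matrix (Fin p) (Fin p) ℝ) {s : ℕ}
    {v : Fin p → ℝ} (hs : {j | v j ≠ 0}.ncard ≤ s) :
    |v ⬝ᵥ A *ᵥ v| ≤ sparseEig s A * ∑ j, v j ^ 2 := by
  set n := ∑ j, v j ^ 2
  obtain hn | hn := (Finset.sum_nonneg fun j _ => sq_nonneg (v j) : 0 ≤ n).eq_or_lt
  · have hv : v = 0 := funext fun j =>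
      pow_eq_zero_iff two_ne_zero |>.mp <|
        (Finset.sum_eq_zero_iff_of_nonneg fun j _ => sq_nonneg (v j)).mp hn.symm j
          (Finset.mem_univ j)
    simp [hv, n]
  set c := Real.sqrt n
  have hc : c ≠ 0 := (Real.sqrt_pos.mpr hn).ne'
  have hc2 : c ^ 2 = n := Real.sq_sqrt hn.le
  have hu : ∑ j, (c⁻¹ • v) j ^ 2 = 1 := by
    simp only [Pi.smul_apply, smul_eq_mul, mul_pow, ← Finset.mul_sum, inv_pow, hc2]
    exact inv_mul_cancel₀ hn.ne'
  have husupp : {j | (c⁻¹ • v) j ≠ 0}.ncard ≤ s := by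
    change (Function.support _).ncard ≤ s
    rwa [Function.support_const_smul_of_ne_zero _ _ (inv_ne_zero hc)]
  have key := abs_dotProduct_mulVec_le_sparseEig A hu husupp
  rw [mulVec_smul, dotProduct_smul, smul_dotProduct, smul_smul, smul_eq_mul, abs_mul,
    abs_of_pos (by positivity), ← mul_inv, ← sq, hc2] at key
  rwa [inv_mul_le_iff₀ hn, mul_comm] at key

lemma sparseEig_mono (A : Matrix (Fin p) (Fin p) ℝ) {s s' : ℕ} (h : s ≤ s') :
    sparseEig s A ≤ sparseEig s' A :=
  sparseEig_le_of_forall (sparseEig_nonneg s' A) fun _ hv hs =>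
    abs_dotProduct_mulVec_le_sparseEig A hv (hs.trans h)

lemma sparseEig_le_two_mul_of_posSemidef {M : Matrix (Fin p) (Fin p) ℝ} (hM : M.PosSemidef)
    {s s₀ : ℕ} (h : s₀ ≤ 2 * s) : sparseEig s₀ M ≤ 2 * sparseEig s M := by
  refine sparseEig_le_of_forall (by linarith [sparseEig_nonneg s M]) fun v hv hs => ?_
  obtain ⟨T, hT, hTc⟩ :=
    exists_set_ncard_support_indicator_le (s := s) (t := s) (hs.trans (by omega))
  have hnorm : ∑ j, T.indicator v j ^ 2 + ∑ j, Tᶜ.indicator v j ^ 2 = 1 := by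
    rw [← Finset.sum_add_distrib, ← hv]
    refine Finset.sum_congr rfl fun j _ => ?_
    by_cases hj : j ∈ T <;> simp [hj]
  have h₁ := (le_abs_self _).trans (abs_dotProduct_mulVec_le_sparseEig_mul M hT)
  have h₂ := (le_abs_self _).trans (abs_dotProduct_mulVec_le_sparseEig_mul M hTc)
  have hsum := hM.dotProduct_mulVec_add_le (T.indicator v) (Tᶜ.indicator v)
  rw [Set.indicator_self_add_compl] at hsum
  have hsplit : sparseEig s M * ∑ j, T.indicator v j ^ 2 +
      sparseEig s M * ∑ j, Tᶜ.indicator v j ^ 2 = sparseEig s M := by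
    rw [← mul_add, hnorm, mul_one]
  rw [abs_of_nonneg (by simpa using hM.dotProduct_mulVec_nonneg v)]
  linarith

lemma sparseEig_sub_le_max_of_posSemidef {M₁ M₂ : Matrix (Fin p) (Fin p) ℝ}
    (hM₁ : M₁.PosSemidef) (hM₂ : M₂.PosSemidef) (s : ℕ) :
    sparseEig s (M₁ - M₂) ≤ max (sparseEig s M₁) (sparseEig s M₂) := by
  refine sparseEig_le_of_forall ((sparseEig_nonneg s M₁).trans (le_max_left _ _))
    fun v hv hs => ?_
  have h₁ := abs_dotProduct_mulVec_le_sparseEig M₁ hv hs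
  have h₂ := abs_dotProduct_mulVec_le_sparseEig M₂ hv hs
  have h₁' : 0 ≤ v ⬝ᵥ M₁ *ᵥ v := by simpa using hM₁.dotProduct_mulVec_nonneg v
  have h₂' : 0 ≤ v ⬝ᵥ M₂ *ᵥ v := by simpa using hM₂.dotProduct_mulVec_nonneg v
  rw [abs_of_nonneg h₁'] at h₁
  rw [abs_of_nonneg h₂'] at h₂
  rw [sub_mulVec, dotProduct_sub]
  simpa using abs_sub_le_of_le_of_le h₁' (h₁.trans (le_max_left _ _)) h₂'
    (h₂.trans (le_max_right _ _))

/-- elementary properties of sparse eigenvalues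
(Lemma 12 of the paper). -/
theorem sparse_eig_properties (p : ℕ) :
    (∀ M0 : Matrix (Fin p) (Fin p) ℝ, M0.PosDef →
      ∀ s s' : ℕ, 1 ≤ s → s ≤ s' → s' ≤ p → sparseEig s M0 ≤ sparseEig s' M0) ∧
    (∀ M0 : Matrix (Fin p) (Fin p) ℝ, M0.PosDef →
      ∀ s s0 : ℕ, 1 ≤ s → (s0 : ℝ) / 2 ≤ (s : ℝ) → s ≤ s0 → s0 ≤ p →
        sparseEig s0 M0 ≤ 4 * sparseEig s M0) ∧
    (∀ M1 M2 : Matrix (Fin p) (Fin p) ℝ, M1.PosDef → M2.PosDef →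
      ∀ s : ℕ, 1 ≤ s → s ≤ p →
        sparseEig s (M1 - M2) ≤ max (sparseEig s M1) (sparseEig s M2)) := by
  refine ⟨fun M0 _ s s' _ hss' _ => sparseEig_mono M0 hss',
    fun M0 hM0 s s0 _ hhalf _ _ => ?_,
    fun M1 M2 hM1 hM2 s _ _ =>
      sparseEig_sub_le_max_of_posSemidef hM1.posSemidef hM2.posSemidef s⟩
  have hs0 : s0 ≤ 2 * s := by exact_mod_cast (by linarith : (s0 : ℝ) ≤ 2 * s)
  calc sparseEig s0 M0 ≤ 2 * sparseEig s M0 :=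
        sparseEig_le_two_mul_of_posSemidef hM0.posSemidef hs0
    _ ≤ 4 * sparseEig s M0 := by linarith [sparseEig_nonneg s M0]

end CovCP
end
end
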